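/- In the admissibility setting (δ=1/5000, T BRE with β̄(T)−β̲(T)<δ, a(n)=a_n(T), α=α(T), sets A and B⊂A with m(B)>(3/4)m(A) and threshold N₀ satisfying the Egorov bounds), if (x,K) is an admissible pair, then limsup_{n→∞, n∈K} a(⌊n/3⌋)/a(n) ≤ 1/√3. -/

import Mathlib

open MeasureTheory Filter Set
open scoped ENNReal Topology

noncomputable section

/-- One-sided Birkhoff sum `S_n(f)(x) = ∑_{k=0}^{n-1} f (T^k x)`. -/
def birkhoffS {X : Type*} (T : X → X) (f : X → ℝ) (n : ℕ) (x : X) : ℝ :=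
  ∑ k ∈ Finset.range n, f (T^[k] x)

/-- Symmetric Birkhoff sum `Σ_n(f)(x) = ∑_{|k|<n} f (T^k x)`, where `T'` is the inverse
of the invertible transformation `T`. -/
def birkhoffSym {X : Type*} (T T' : X → X) (f : X → ℝ) (n : ℕ) (x : X) : ℝ :=
  ∑ k ∈ Finset.range n, f (T^[k] x) + ∑ k ∈ Finset.Icc 1 (n - 1), f (T'^[k] x)

/-- The return sequence `a_n(A) = (1/m(A)²) ∑_{k=0}^{n-1} m (A ∩ T^{-k} A)`. -/
def aSeq {X : Type*} [MeasurableSpace X] (T : X → X) (m : MeasureTheory.Measure X)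
    (A : Set X) (n : ℕ) : ℝ :=
  (∑ k ∈ Finset.range n, (m (A ∩ (T^[k]) ⁻¹' A)).toReal) / (m A).toReal ^ 2

/-- The two-sided return sequence `ā_n(A) = (1/m(A)²) ∑_{|k|≤n} m (A ∩ T^k A)`,
where `T'` is the inverse of `T` (so that `T^k A = (T'^k)⁻¹ A` for `k ≥ 0`). -/
def aSeqSym {X : Type*} [MeasurableSpace X] (T T' : X → X) (m : MeasureTheory.Measure X)
    (A : Set X) (n : ℕ) : ℝ :=
  ((m A).toReal + ∑ k ∈ Finset.Icc 1 n,
      ((m (A ∩ (T'^[k]) ⁻¹' A)).toReal + (m (A ∩ (T^[k]) ⁻¹' A)).toReal)) /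
    (m A).toReal ^ 2

/-- `T` is boundedly rationally ergodic (BRE): there are `A` of positive finite measure
and `M < ∞` with `S_n(1_A) ≤ M a_n(A)` a.e. on `A` for all `n ≥ 1`. -/
def BddRatErg {X : Type*} [MeasurableSpace X] (T : X → X)
    (m : MeasureTheory.Measure X) : Prop :=
  ∃ A : Set X, MeasurableSet A ∧ 0 < m A ∧ m A < ⊤ ∧
    ∃ M : ℝ, ∀ n : ℕ, 1 ≤ n →
      ∀ᵐ x ∂(m.restrict A), birkhoffS T (A.indicator 1) n x ≤ M * aSeq T m A n

/-- `T` is two-sided boundedly rationally ergodic: there are `A` of positive finite measure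
and `M < ∞` with `Σ_n(1_A) ≤ M ā_n(A)` a.e. on `A` for all `n ≥ 1`. -/
def TwoSidedBRE {X : Type*} [MeasurableSpace X] (T T' : X → X)
    (m : MeasureTheory.Measure X) : Prop :=
  ∃ A : Set X, MeasurableSet A ∧ 0 < m A ∧ m A < ⊤ ∧
    ∃ M : ℝ, ∀ n : ℕ, 1 ≤ n →
      ∀ᵐ x ∂(m.restrict A), birkhoffSym T T' (A.indicator 1) n x ≤ M * aSeqSym T T' m A n

/-- `tailSup g n = sup_{N ≥ n} g N`. -/
def tailSup (g : ℕ → ℝ) (n : ℕ) : ℝ := sSup (g '' Set.Ici n)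

/-!
For `n ∈ K` put `k = ⌊n/3⌋` and `S_j = S_j(1_A)(x)`. Since `T'` inverts `T`, a symmetric sum
at `Tⁿx` is a difference of one-sided sums at `x`: `Σ_s(1_A)(Tⁿx) = S_{n+s} - S_{n+1-s}`.
Both `x` and `Tⁿx` lie in `B`, so the Egorov bounds for `Σ` hold at both points and give
* `S_{2n} - 1 ≤ (2+2δ) a(n) m(A)`  (`Σ_n` at `Tⁿx`),
* `(2-2δ) a(n-k) m(A) ≤ S_{2n} - S_{k+1}`  (`Σ_{n-k}` at `Tⁿx`),
* `(2-2δ) a(k+1) m(A) ≤ S_{k+1} + (Σ_n - S_n)(1_A)(x) ≤ S_{k+1} + (2+2δ) a(n) m(A) - S_n`.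
Adding, with `a` nondecreasing: `2(2-2δ) a(k) m(A) ≤ 1 + 2(2+2δ) a(n) m(A) - S_n`.
Along `K`, (A1) and (A5) give `S_n ~ α a(n) m(A)` with `α > 2 - 2δ`, and hence `a(n) → ∞`,
so eventually `a(k)/a(n) ≤ 4/7 < 1/√3`.
-/

section Birkhoff

variable {X : Type*} {T T' : X → X} {f : X → ℝ} {x : X}

theorem birkhoffS_one : birkhoffS T f 1 x = f x := by simp [birkhoffS]

theorem birkhoffS_mono (hf : 0 ≤ f) : Monotone fun n => birkhoffS T f n x := fun _ _ hpq =>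
  Finset.sum_le_sum_of_subset_of_nonneg (Finset.range_subset_range.2 hpq) fun _ _ _ => hf _

theorem birkhoffSym_sub_birkhoffS_mono (hf : 0 ≤ f) :
    Monotone fun n => birkhoffSym T T' f n x - birkhoffS T f n x := fun _ _ hpq => by
  simp only [birkhoffSym, birkhoffS, add_sub_cancel_left]
  exact Finset.sum_le_sum_of_subset_of_nonneg (Finset.Icc_subset_Icc_right (by omega))
    fun _ _ _ => hf _

theorem birkhoffSym_iterate (hinv : Function.LeftInverse T' T) {s n : ℕ} (hs : 0 < s)
    (hsn : s ≤ n) :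
    birkhoffSym T T' f s (T^[n] x) = birkhoffS T f (n + s) x - birkhoffS T f (n + 1 - s) x := by
  have hforward : ∑ i ∈ Finset.range s, f (T^[i] (T^[n] x))
      = birkhoffS T f (n + s) x - birkhoffS T f n x := by
    rw [birkhoffS, birkhoffS, Finset.sum_range_add, add_sub_cancel_left]
    exact Finset.sum_congr rfl fun i _ => by rw [← Function.iterate_add_apply, add_comm]
  have hbackward : ∑ i ∈ Finset.Icc 1 (s - 1), f (T'^[i] (T^[n] x))
      = birkhoffS T f n x - birkhoffS T f (n + 1 - s) x := by
    have hreflect : ∀ i ∈ Finset.Ico 1 s, f (T'^[i] (T^[n] x)) = f (T^[n - i] x) := by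
      intro i hi
      have hin : T^[n] x = T^[i] (T^[n - i] x) := by
        rw [← Function.iterate_add_apply,
          Nat.add_sub_cancel' ((Finset.mem_Ico.1 hi).2.le.trans hsn)]
      rw [hin, hinv.iterate i]
    rw [show Finset.Icc 1 (s - 1) = Finset.Ico 1 s by ext; simp; omega,
      Finset.sum_congr rfl hreflect, Finset.sum_Ico_reflect (fun j => f (T^[j] x)) 1 (by omega),
      Nat.add_sub_cancel, birkhoffS, birkhoffS, Finset.sum_Ico_eq_sub _ (by omega)]
  rw [birkhoffSym, hforward, hbackward]
  ring

theorem tendsto_birkhoffS_indicator_atTop {A : Set X} (hA : {n | T^[n] x ∈ A}.Infinite) :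
    Tendsto (fun n => birkhoffS T (A.indicator 1) n x) atTop atTop := by
  classical
  have hcount : ∀ n, birkhoffS T (A.indicator 1) n x = Nat.count (fun j => T^[j] x ∈ A) n := by
    intro n
    simp [birkhoffS, Nat.count_eq_card_filter_range, Set.indicator_apply, Finset.sum_boole]
  simp only [hcount]
  exact tendsto_natCast_atTop_atTop.comp <| tendsto_atTop_atTop_of_monotone (Nat.count_monotone _)
    fun q => ⟨Nat.nth _ q, (Nat.count_nth_of_infinite hA q).ge⟩

end Birkhoff

theorem aSeq_nonneg {X : Type*} [MeasurableSpace X] (T : X → X) (m : Measure X) (A : Set X)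
    (n : ℕ) : 0 ≤ aSeq T m A n := by
  unfold aSeq
  positivity

theorem aSeq_mono {X : Type*} [MeasurableSpace X] (T : X → X) (m : Measure X) (A : Set X) :
    Monotone (aSeq T m A) := fun _ _ hpq =>
  div_le_div_of_nonneg_right (Finset.sum_le_sum_of_subset_of_nonneg
    (Finset.range_subset_range.2 hpq) fun _ _ _ => ENNReal.toReal_nonneg) (by positivity)

namespace Filter.Tendsto

variable {ι : Type*} {l : Filter ι} {f g h : ι → ℝ} {c d : ℝ}

theorem div_mul_div_cancel (hfg : Tendsto (fun i => f i / g i) l (𝓝 c))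
    (hgh : Tendsto (fun i => g i / h i) l (𝓝 d)) (hg : ∀ᶠ i in l, g i ≠ 0) :
    Tendsto (fun i => f i / h i) l (𝓝 (c * d)) :=
  (hfg.mul hgh).congr' (hg.mono fun _ hgi => div_mul_div_cancel₀ hgi)

theorem atTop_of_div (hc : 0 < c) (hdiv : Tendsto (fun i => f i / g i) l (𝓝 c))
    (hf : Tendsto f l atTop) : Tendsto g l atTop := by
  refine tendsto_atTop_mono' l ?_ (hf.atTop_div_const (by positivity : 0 < 2 * c))
  filter_upwards [hdiv.eventually (gt_mem_nhds (by linarith : c < 2 * c)),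
    hdiv.eventually (lt_mem_nhds hc), hf.eventually_gt_atTop 0] with i hlt hpos hfpos
  have hgpos : 0 < g i := (div_pos_iff_of_pos_left hfpos).1 hpos
  rw [div_lt_iff₀ hgpos] at hlt
  rw [div_le_iff₀ (by positivity)]
  linarith

end Filter.Tendsto

theorem a_div_three_le_of_birkhoffSym_bounds {X : Type*} {T T' : X → X}
    (hinv : Function.LeftInverse T' T) {A B : Set X} {a : ℕ → ℝ} (ha : Monotone a)
    {c C μ : ℝ} (hc : 0 ≤ c) (hμ : 0 ≤ μ) {N₀ : ℕ}
    (hlow : ∀ n, N₀ ≤ n → ∀ y ∈ B,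
      c * a n * μ ≤ birkhoffSym T T' (A.indicator 1) n y)
    (hup : ∀ n, N₀ ≤ n → ∀ y ∈ B, birkhoffSym T T' (A.indicator 1) n y ≤ C * a n * μ)
    {x : X} (hx : x ∈ B) {n : ℕ} (hTn : T^[n] x ∈ B) (hN₀ : N₀ ≤ n / 3) (hn : 0 < n) :
    2 * c * a (n / 3) * μ ≤ 1 + 2 * C * a n * μ - birkhoffS T (A.indicator 1) n x := by
  have hf : 0 ≤ A.indicator (1 : X → ℝ) := Set.indicator_nonneg fun _ _ => zero_le_one
  have hfar := hup n (by omega) _ hTn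
  rw [birkhoffSym_iterate hinv hn le_rfl, Nat.add_sub_cancel_left, birkhoffS_one] at hfar
  have hmid := hlow (n - n / 3) (by omega) _ hTn
  rw [birkhoffSym_iterate hinv (by omega) (by omega),
    show n + 1 - (n - n / 3) = n / 3 + 1 by omega] at hmid
  have hnear := hlow (n / 3 + 1) (by omega) x hx
  have hback := birkhoffSym_sub_birkhoffS_mono (T := T) (T' := T') (x := x) hf
    (show n / 3 + 1 ≤ n by omega)
  have hS := birkhoffS_mono (T := T) (x := x) hf (show n + (n - n / 3) ≤ n + n by omega)
  have hx1 : A.indicator (1 : X → ℝ) x ≤ 1 :=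
    Set.indicator_le_self' (fun _ _ => zero_le_one) x
  have ha₁ : c * a (n / 3) * μ ≤ c * a (n - n / 3) * μ := by gcongr; exact ha (by omega)
  have ha₂ : c * a (n / 3) * μ ≤ c * a (n / 3 + 1) * μ := by gcongr; exact ha (by omega)
  have hxn := hup n (by omega) x hx
  simp only at hS hback
  linarith

theorem eventually_a_div_three_div_le {X : Type*} {T T' : X → X}
    (hinv : Function.LeftInverse T' T) {A B : Set X} {a : ℕ → ℝ} (ha : Monotone a)
    {α μ : ℝ} (hα : 2 - 2 / 5000 < α) (hμ : 0 < μ) {N₀ : ℕ}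
    (hlow : ∀ n, N₀ ≤ n → ∀ y ∈ B,
      (2 - 2 / 5000) * a n * μ ≤ birkhoffSym T T' (A.indicator 1) n y)
    (hup : ∀ n, N₀ ≤ n → ∀ y ∈ B,
      birkhoffSym T T' (A.indicator 1) n y ≤ (2 + 2 / 5000) * a n * μ)
    {x : X} (hx : x ∈ B) {l : Filter ℕ} (hl : l ≤ atTop)
    (hvisit : ∀ᶠ n in l, T^[n] x ∈ B)
    (haTop : Tendsto a l atTop)
    (hratio : Tendsto (fun n => birkhoffS T (A.indicator 1) n x / (α * a n)) l (𝓝 μ)) :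
    ∀ᶠ n in l, a (n / 3) / a n ≤ 4 / 7 := by
  -- with `S_n ≥ (9/10) α a(n) μ` and `a(n) μ ≥ 100` the key estimate gives `a(k)/a(n) ≤ 0.553`
  filter_upwards [hvisit, (eventually_ge_atTop (3 * N₀ + 3)).filter_mono hl,
    haTop.eventually_ge_atTop (100 / μ),
    hratio.eventually (lt_mem_nhds (by linarith : 9 / 10 * μ < μ))] with n hTn hn hlarge hS
  have hkey := a_div_three_le_of_birkhoffSym_bounds hinv ha (by norm_num) hμ.le hlow hup hx hTn
    (by omega) (by omega)
  have han : 0 < a n := (div_pos (by norm_num) hμ).trans_le hlarge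
  rw [lt_div_iff₀ (mul_pos (by linarith) han)] at hS
  rw [div_le_iff₀ hμ] at hlarge
  have hαu : (2 - 2 / 5000) * (a n * μ) ≤ α * (a n * μ) := by gcongr
  rw [div_le_iff₀ han]
  refine le_of_mul_le_mul_right ?_ hμ
  linarith

theorem limsup_a_third_general
    {X : Type*} [MeasurableSpace X] (m : Measure X)
    (T T' : X → X)
    (hinv₁ : Function.LeftInverse T' T)
    -- `A₀` is a set witnessing bounded rational ergodicity, and `a n = a_n(T) = a_n(A₀)`
    (A₀ : Set X)
    (a : ℕ → ℝ) (ha : ∀ n, a n = aSeq T m A₀ n)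
    -- the constants `α = α(T)`, `βu = β̄(T)`, `βl = β̲(T)`
    (α : ℝ)
    (hα₁ : 2 - 2 / 5000 < α)
    -- the sets `A` and `B ⊆ A` and the Egorov threshold `N₀`
    (A : Set X) (hApos : 0 < m A) (hAfin : m A < ⊤)
    (B : Set X) (hBpos : 0 < m B) (hBsub : B ⊆ A)
    (N₀ : ℕ)
    (hEgorov : ∀ n : ℕ, N₀ ≤ n → ∀ x ∈ B,
      ((2 - 2 / 5000) * (m A).toReal ≤
          tailSup (fun N => birkhoffS T (A.indicator 1) N x / a N) n ∧
        tailSup (fun N => birkhoffS T (A.indicator 1) N x / a N) n ≤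
          (2 + 2 / 5000) * (m A).toReal) ∧
      ((2 - 2 / 5000) * a n * (m A).toReal ≤ birkhoffSym T T' (A.indicator 1) n x ∧
        birkhoffSym T T' (A.indicator 1) n x ≤ (2 + 2 / 5000) * a n * (m A).toReal))
    -- `(x, K)` is an admissible pair
    (x : X) (hxB : x ∈ B)
    (hA1 : Tendsto
      (fun n => birkhoffS T (A.indicator 1) n x / birkhoffS T (B.indicator 1) n x)
      atTop (nhds ((m A).toReal / (m B).toReal)))
    (K : Set ℕ) (hKinf : K.Infinite)
    (hA4 : ∀ n ∈ K, T^[n] x ∈ B)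
    (hA5 : Tendsto (fun n => birkhoffS T (B.indicator 1) n x / (α * a n))
      (atTop ⊓ Filter.principal K) (nhds (m B).toReal))
    :
    Filter.limsup (fun n => a (n / 3) / a n) (atTop ⊓ Filter.principal K) ≤
      1 / Real.sqrt 3 := by
  have hμA : 0 < (m A).toReal := ENNReal.toReal_pos hApos.ne' hAfin.ne
  have hμB : 0 < (m B).toReal :=
    ENNReal.toReal_pos hBpos.ne' ((measure_mono hBsub).trans_lt hAfin).ne
  have haMono : Monotone a := funext ha ▸ aSeq_mono T m A₀
  have hvisitB : {n | T^[n] x ∈ B}.Infinite := hKinf.mono hA4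
  have hKtop : atTop ⊓ 𝓟 K ≤ atTop := inf_le_left
  have hSB := (tendsto_birkhoffS_indicator_atTop hvisitB).mono_left hKtop
  have hSA :=
    (tendsto_birkhoffS_indicator_atTop (hvisitB.mono fun _ hn => hBsub hn)).mono_left hKtop
  have hratio : Tendsto (fun n => birkhoffS T (A.indicator 1) n x / (α * a n))
      (atTop ⊓ 𝓟 K) (𝓝 (m A).toReal) := by
    simpa only [div_mul_cancel₀ _ hμB.ne'] using (hA1.mono_left hKtop).div_mul_div_cancel
      hA5 ((hSB.eventually_gt_atTop 0).mono fun _ hn => hn.ne')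
  have hαpos : 0 < α := by linarith
  have haTop : Tendsto a (atTop ⊓ 𝓟 K) atTop := by
    simpa only [mul_div_cancel_left₀ _ hαpos.ne'] using
      (hratio.atTop_of_div hμA hSA).atTop_div_const hαpos
  have hbound := eventually_a_div_three_div_le hinv₁ haMono hα₁ hμA
    (fun n hn y hy => (hEgorov n hn y hy).2.1) (fun n hn y hy => (hEgorov n hn y hy).2.2) hxB
    hKtop ((eventually_principal.2 hA4).filter_mono inf_le_right) haTop hratio
  have hK : (atTop ⊓ 𝓟 K).NeBot :=
    frequently_iff_neBot.1 (Nat.frequently_atTop_iff_infinite.2 hKinf)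
  calc Filter.limsup (fun n => a (n / 3) / a n) (atTop ⊓ 𝓟 K)
      ≤ 4 / 7 := limsup_le_of_le (isCoboundedUnder_le_of_eventually_le _
        (Eventually.of_forall fun n => div_nonneg (ha (n / 3) ▸ aSeq_nonneg T m A₀ _)
          (ha n ▸ aSeq_nonneg T m A₀ _))) hbound
    _ ≤ 1 / Real.sqrt 3 := by
      rw [le_one_div (by norm_num) (by positivity), Real.sqrt_le_left (by norm_num)]
      norm_num

/-- In the admissibility setting, for an admissible pair `(x, K)`:
`limsup_{n∈K} a(⌊n/3⌋)/a(n) ≤ 1/√3`. -/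
theorem limsup_a_third
    {X : Type*} [MeasurableSpace X] (m : Measure X) [SigmaFinite m]
    (T T' : X → X) (hT'meas : Measurable T')
    (hinv₁ : Function.LeftInverse T' T) (hinv₂ : Function.RightInverse T' T)
    (hT : Ergodic T m) (hcons : Conservative T m) (hXinf : m Set.univ = ⊤)
    -- `A₀` is a set witnessing bounded rational ergodicity, and `a n = a_n(T) = a_n(A₀)`
    (A₀ : Set X) (hA₀ : MeasurableSet A₀) (hA₀pos : 0 < m A₀) (hA₀fin : m A₀ < ⊤)
    (M : ℝ)
    (hBRE : ∀ n : ℕ, 1 ≤ n → ∀ᵐ x ∂(m.restrict A₀),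
      birkhoffS T (A₀.indicator 1) n x ≤ M * aSeq T m A₀ n)
    (a : ℕ → ℝ) (ha : ∀ n, a n = aSeq T m A₀ n)
    -- the constants `α = α(T)`, `βu = β̄(T)`, `βl = β̲(T)`
    (α βu βl : ℝ)
    (hα : ∀ f : X → ℝ, Integrable f m → (∀ x, 0 ≤ f x) →
      ∀ᵐ x ∂m,
        Filter.limsup (fun n => ENNReal.ofReal (birkhoffS T f n x / a n)) atTop
          = ENNReal.ofReal (α * ∫ x, f x ∂m))
    (hβu : ∀ f : X → ℝ, Integrable f m → (∀ x, 0 ≤ f x) →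
      ∀ᵐ x ∂m,
        Filter.limsup (fun n => ENNReal.ofReal (birkhoffSym T T' f n x / (2 * a n))) atTop
          = ENNReal.ofReal (βu * ∫ x, f x ∂m))
    (hβl : ∀ f : X → ℝ, Integrable f m → (∀ x, 0 ≤ f x) →
      ∀ᵐ x ∂m,
        Filter.liminf (fun n => ENNReal.ofReal (birkhoffSym T T' f n x / (2 * a n))) atTop
          = ENNReal.ofReal (βl * ∫ x, f x ∂m))
    (hgap : βu - βl < 1 / 5000)
    (hα₁ : 2 - 2 / 5000 < α) (hα₂ : α < 2 + 2 / 5000)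
    -- the sets `A` and `B ⊆ A` and the Egorov threshold `N₀`
    (A : Set X) (hA : MeasurableSet A) (hApos : 0 < m A) (hAfin : m A < ⊤)
    (B : Set X) (hB : MeasurableSet B) (hBpos : 0 < m B) (hBsub : B ⊆ A)
    (hB34 : 3 / 4 * (m A).toReal < (m B).toReal)
    (N₀ : ℕ)
    (hEgorov : ∀ n : ℕ, N₀ ≤ n → ∀ x ∈ B,
      ((2 - 2 / 5000) * (m A).toReal ≤
          tailSup (fun N => birkhoffS T (A.indicator 1) N x / a N) n ∧
        tailSup (fun N => birkhoffS T (A.indicator 1) N x / a N) n ≤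
          (2 + 2 / 5000) * (m A).toReal) ∧
      ((2 - 2 / 5000) * a n * (m A).toReal ≤ birkhoffSym T T' (A.indicator 1) n x ∧
        birkhoffSym T T' (A.indicator 1) n x ≤ (2 + 2 / 5000) * a n * (m A).toReal))
    -- `(x, K)` is an admissible pair
    (x : X) (hxB : x ∈ B)
    (hA1 : Tendsto
      (fun n => birkhoffS T (A.indicator 1) n x / birkhoffS T (B.indicator 1) n x)
      atTop (nhds ((m A).toReal / (m B).toReal)))
    (hA2 : ∀ n : ℕ, N₀ ≤ n →
      (1 - 1 / 5000) * (2 * a n) * (m B).toReal < birkhoffSym T T' (B.indicator 1) n x ∧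
      birkhoffSym T T' (B.indicator 1) n x < (1 + 1 / 5000) * (2 * a n) * (m B).toReal)
    (hA3 : Tendsto
      (fun n => tailSup (fun N => birkhoffS T (B.indicator 1) N x / (α * a N)) n)
      atTop (nhds (m B).toReal))
    (K : Set ℕ) (hKinf : K.Infinite)
    (hA4 : ∀ n ∈ K, T^[n] x ∈ B)
    (hA5 : Tendsto (fun n => birkhoffS T (B.indicator 1) n x / (α * a n))
      (atTop ⊓ Filter.principal K) (nhds (m B).toReal))
    :
    Filter.limsup (fun n => a (n / 3) / a n) (atTop ⊓ Filter.principal K) ≤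
      1 / Real.sqrt 3 :=
  limsup_a_third_general m T T' hinv₁ A₀ a ha α hα₁ A hApos hAfin B hBpos hBsub N₀ hEgorov x hxB hA1
    K hKinf hA4 hA5
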